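/- arXiv:1412.1069 — 5 statements merged into one kernel-verified Lean document; each statement's English description precedes it below -/
import Mathlib

section
/- Let F be a monotone DNF Boolean formula over a finite variable set X with probability function p : X → [0,1], and let F' be a monotone DNF formula over a variable set X' that is a dissociation of F through a substitution θ : X' → X. Assume that for every variable X ∈ X, no two distinct dissociations X', X'' of X occur together in one prime implicant of F'. Then P[F] ≤ P[F'], where the probability function on X' is p'(X') = p(θ(X')). -/
open scoped Classical

namespace PDB

noncomputable section

/-! ### Monotone DNF formulas over a finite variable set -/

/-- Probability that a monotone DNF formula (given by its finite set of implicants, each a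
finite set of positive variables) is true, when each variable `x` is independently true with
probability `p x`. -/
def dnfProb {X : Type*} [Fintype X] (p : X → ℝ) (F : Finset (Finset X)) : ℝ :=
  ∑ ω : X → Bool,
    (∏ x : X, if ω x = true then p x else 1 - p x) *
      (if ∃ T ∈ F, ∀ x ∈ T, ω x = true then 1 else 0)

/-- A prime implicant of a monotone DNF formula: a minimal implicant. -/
def IsPrimeImplicant {X : Type*} (F : Finset (Finset X)) (T : Finset X) : Prop :=
  T ∈ F ∧ ∀ S ∈ F, S ⊆ T → S = T

variable {A V dom : Type*}

/-! ### Self-join-free conjunctive queries: hierarchy and connectivity.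
A self-join-free conjunctive query is given by its atoms: a family `atoms : A → Finset V`
assigning to each of the (pairwise distinct) relation symbols its finite set of variables;
`H` denotes the set of head variables (treated as constants); all other variables are
existential.  A Boolean query has `H = ∅`. -/

/-- `at(x)`: the atoms among `S` that contain the variable `x`. -/
def atOf (atoms : A → Finset V) (S : Finset A) (x : V) : Finset A :=
  S.filter (fun i => x ∈ atoms i)

/-- The query consisting of the atoms `S` is hierarchical, with the variables in `H`
treated as constants (head variables): for any two existential variables, their atom sets
are comparable or disjoint. -/
def HierOn (atoms : A → Finset V) (S : Finset A) (H : Finset V) : Prop :=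
  ∀ x : V, x ∉ H → ∀ y : V, y ∉ H →
    atOf atoms S x ⊆ atOf atoms S y ∨ atOf atoms S x ∩ atOf atoms S y = ∅ ∨
      atOf atoms S y ⊆ atOf atoms S x

/-- A Boolean query (with all its atoms) is hierarchical. -/
def Hier [Fintype A] (atoms : A → Finset V) : Prop :=
  HierOn atoms Finset.univ ∅

/-- The set of atoms `S` is disconnected: it can be partitioned into two nonempty sets
sharing no variables. -/
def Disconn (atoms : A → Finset V) (S : Finset A) : Prop :=
  ∃ T : Finset A, T ⊆ S ∧ T.Nonempty ∧ (S \ T).Nonempty ∧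
    ∀ i ∈ T, ∀ j ∈ S \ T, atoms i ∩ atoms j = ∅

/-- `T` is a connected component of the set of atoms `S`: a maximal connected subset. -/
def IsComp (atoms : A → Finset V) (S T : Finset A) : Prop :=
  T ⊆ S ∧ T.Nonempty ∧ ¬ Disconn atoms T ∧
    ∀ U : Finset A, T ⊆ U → U ⊆ S → ¬ Disconn atoms U → U = T

/-- `xs` is a cut-set of the query with atoms `S`: a set of its variables whose removal
disconnects the query. -/
def IsCutSet (atoms : A → Finset V) (S : Finset A) (xs : Finset V) : Prop :=
  xs ⊆ S.sup atoms ∧ Disconn (fun i => atoms i \ xs) S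

/-- a minimal cut-set (min-cut-set) -/
def MinCut (atoms : A → Finset V) (S : Finset A) (xs : Finset V) : Prop :=
  IsCutSet atoms S xs ∧ ∀ ys : Finset V, ys ⊂ xs → ¬ IsCutSet atoms S ys

/-- the separator variables of a Boolean query: the variables occurring in every atom -/
def SepVars [Fintype A] [Fintype V] (atoms : A → Finset V) : Finset V :=
  Finset.univ.filter (fun x => ∀ i : A, x ∈ atoms i)

/-- the set of variables of a query -/
def varsOf [Fintype A] (atoms : A → Finset V) : Finset V :=
  Finset.univ.sup atoms

/-! ### Dissociations -/

/-- `Δ` is a dissociation of the query with atoms `atoms` and head variables `H`: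
each atom receives extra existential variables of the query that it does not already
contain. -/
def IsDiss [Fintype A] (atoms : A → Finset V) (H : Finset V) (Δ : A → Finset V) : Prop :=
  ∀ i : A, Δ i ⊆ (varsOf atoms \ H) \ atoms i

/-- the atoms of the dissociated query `q^Δ` -/
def dissAtoms (atoms Δ : A → Finset V) : A → Finset V := fun i => atoms i ∪ Δ i

/-- the partial dissociation order `Δ ≼ Δ'` -/
def dissLE (Δ Δ' : A → Finset V) : Prop := ∀ i : A, Δ i ⊆ Δ' i

/-- a safe dissociation: the dissociated query is hierarchical -/
def SafeDiss [Fintype A] (atoms : A → Finset V) (H : Finset V) (Δ : A → Finset V) : Prop :=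
  IsDiss atoms H Δ ∧ HierOn (dissAtoms atoms Δ) Finset.univ H

/-- a minimal safe dissociation: no smaller dissociation (in the order `≼`) is safe -/
def MinSafeDiss [Fintype A] (atoms : A → Finset V) (H : Finset V) (Δ : A → Finset V) : Prop :=
  SafeDiss atoms H Δ ∧
    ∀ Δ' : A → Finset V, SafeDiss atoms H Δ' → dissLE Δ' Δ → Δ' = Δ

/-! ### Tuple-independent probabilistic databases -/

/-- A tuple-independent probabilistic database for the query with atoms `atoms` over the
finite domain `dom`: each relation `i` is a finite set of tuples (functions from the
variables of the atom to the domain), each carrying a probability. -/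
structure DB (atoms : A → Finset V) (dom : Type*) where
  tuples : ∀ i : A, Finset ({x // x ∈ atoms i} → dom)
  prob : ∀ i : A, ({x // x ∈ atoms i} → dom) → ℝ

/-- all tuple probabilities lie in [0,1] -/
def DB.Valid {atoms : A → Finset V} (D : DB atoms dom) : Prop :=
  ∀ i : A, ∀ t ∈ D.tuples i, 0 ≤ D.prob i t ∧ D.prob i t ≤ 1

/-- the restriction of a valuation of all variables to the tuple format of atom `i` -/
def restrict (atoms : A → Finset V) (i : A) (ν : V → dom) : {x // x ∈ atoms i} → dom :=
  fun x => ν x.1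

/-- restriction of a tuple to a smaller variable set -/
def restrictTup {xs ys : Finset V} (h : xs ⊆ ys) (t : {x // x ∈ ys} → dom) :
    {x // x ∈ xs} → dom :=
  fun x => t ⟨x.1, h x.2⟩

/-- `P(q)`: the probability that the Boolean query with atoms `atoms` is true in a possible
world chosen by independently including each tuple `t` of `D` with probability `p(t)`. -/
def queryProb [Fintype A] (atoms : A → Finset V) (D : DB atoms dom) : ℝ :=
  ∑ W : ∀ i : A, {t // t ∈ D.tuples i} → Bool,
    (∏ i : A, ∏ t : {t // t ∈ D.tuples i},
        if W i t = true then D.prob i t.1 else 1 - D.prob i t.1) *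
      (if ∃ ν : V → dom, ∀ i : A,
            ∃ h : restrict atoms i ν ∈ D.tuples i, W i ⟨restrict atoms i ν, h⟩ = true
        then 1 else 0)

/-- The dissociated database `D^Δ`: relation `R_i^{ȳ_i}` contains one copy of each tuple
`t ∈ R_i` for every assignment of the added variables `ȳ_i` to domain values, with the same
probability as `t`. -/
def dissDB [Fintype dom] (atoms Δ : A → Finset V) (D : DB atoms dom) :
    DB (dissAtoms atoms Δ) dom where
  tuples i := Finset.univ.filter
    (fun t : {x // x ∈ dissAtoms atoms Δ i} → dom =>
      restrictTup (show atoms i ⊆ dissAtoms atoms Δ i from Finset.subset_union_left) t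
        ∈ D.tuples i)
  prob i t :=
    D.prob i
      (restrictTup (show atoms i ⊆ dissAtoms atoms Δ i from Finset.subset_union_left) t)

/-- `P(q^Δ)`: the probability of the dissociated query on the dissociated database. -/
def dissProb [Fintype A] [Fintype dom] (atoms Δ : A → Finset V) (D : DB atoms dom) : ℝ :=
  queryProb (dissAtoms atoms Δ) (dissDB atoms Δ D)

/-- The propagation score `ρ(q)`: the minimum of `P(q^Δ)` over all safe dissociations. -/
def propScore [Fintype A] [Fintype dom] (atoms : A → Finset V)
    (D : DB atoms dom) : ℝ :=
  sInf { r : ℝ | ∃ Δ : A → Finset V, SafeDiss atoms ∅ Δ ∧ r = dissProb atoms Δ D }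

/-- the database with all tuple probabilities scaled by the factor `f` -/
def scaleDB {atoms : A → Finset V} (D : DB atoms dom) (f : ℝ) : DB atoms dom where
  tuples := D.tuples
  prob i t := f * D.prob i t

/-- relation `i` is deterministic: all its tuples have probability 1 (otherwise it is
probabilistic) -/
def Deterministic {atoms : A → Finset V} (D : DB atoms dom) (i : A) : Prop :=
  ∀ t ∈ D.tuples i, D.prob i t = 1

/-- The lineage `F_{q,D}` of the Boolean query on `D`: the monotone DNF over the tuples of
`D` whose implicants correspond to the satisfying assignments of the query. -/
def lineage [Fintype A] [Fintype V] [Fintype dom] (atoms : A → Finset V)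
    (D : DB atoms dom) :
    Finset (Finset (Σ i : A, {x // x ∈ atoms i} → dom)) :=
  ((Finset.univ : Finset (V → dom)).filter
      (fun ν => ∀ i : A, restrict atoms i ν ∈ D.tuples i)).image
    (fun ν => Finset.univ.image
      (fun i : A => (⟨i, restrict atoms i ν⟩ : Σ i : A, {x // x ∈ atoms i} → dom)))

/-- The substitution `θ : D^Δ → D` mapping every tuple of a dissociated relation
`R_i^{ȳ_i}` to its projection onto the original variables of `R_i`. -/
def dissTupleMap (atoms Δ : A → Finset V) :
    (Σ i : A, {x // x ∈ dissAtoms atoms Δ i} → dom) →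
      Σ i : A, {x // x ∈ atoms i} → dom :=
  fun t =>
    ⟨t.1, restrictTup (show atoms t.1 ⊆ dissAtoms atoms Δ t.1 from Finset.subset_union_left)
      t.2⟩

/-! ### Functional dependencies -/

/-- `Determines Γ xs y`: the variable `y` is in the closure `xs⁺` of `xs` under the
functional dependencies `Γ`. -/
inductive Determines (Γ : Set (Finset V × V)) : Finset V → V → Prop
  | mem (xs : Finset V) (y : V) (h : y ∈ xs) : Determines Γ xs y
  | step (xs : Finset V) (fd : Finset V × V) (hfd : fd ∈ Γ)
      (hall : ∀ z ∈ fd.1, Determines Γ xs z) : Determines Γ xs fd.2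

/-- The functional dependency `fd` is an FD on the attributes of relation `j` that holds
in the database `D`. -/
def FDHolds (atoms : A → Finset V) (D : DB atoms dom) (j : A) (fd : Finset V × V) : Prop :=
  ∃ h1 : fd.1 ⊆ atoms j, ∃ h2 : fd.2 ∈ atoms j,
    ∀ t ∈ D.tuples j, ∀ t' ∈ D.tuples j,
      (∀ v : V, ∀ hv : v ∈ fd.1, t ⟨v, h1 hv⟩ = t' ⟨v, h1 hv⟩) →
        t ⟨fd.2, h2⟩ = t' ⟨fd.2, h2⟩

/-! ### Query plans -/

/-- Query plans: atoms, duplicate-eliminating projections (given by the retained head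
variables), and k-ary natural joins. -/
inductive Plan (A V : Type*) where
  | atom : A → Plan A V
  | proj : Finset V → Plan A V → Plan A V
  | join : List (Plan A V) → Plan A V

namespace Plan

/-- the head variables of a plan -/
def hvar (atoms : A → Finset V) : Plan A V → Finset V
  | .atom i => atoms i
  | .proj hv _ => hv
  | .join Ps => Ps.attach.foldr (fun P acc => hvar atoms P.1 ∪ acc) ∅
decreasing_by
  all_goals simp_wf
  all_goals try have := List.sizeOf_lt_of_mem P.2
  all_goals omega

/-- the multiset of atoms used by a plan -/
def atomsOf : Plan A V → Multiset A
  | .atom i => {i}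
  | .proj _ P => atomsOf P
  | .join Ps => Ps.attach.foldr (fun P acc => atomsOf P.1 + acc) 0
decreasing_by
  all_goals simp_wf
  all_goals try have := List.sizeOf_lt_of_mem P.2
  all_goals omega

def isProj : Plan A V → Prop
  | .proj _ _ => True
  | _ => False

def isJoin : Plan A V → Prop
  | .join _ => True
  | _ => False

/-- structural well-formedness: projections only retain available variables, joins are at
least binary, and joins and projections alternate -/
def WF (atoms : A → Finset V) : Plan A V → Prop
  | .atom _ => True
  | .proj hv P => hv ⊆ hvar atoms P ∧ ¬ isProj P ∧ WF atoms P
  | .join Ps => 2 ≤ Ps.length ∧ ∀ P ∈ Ps, ¬ isJoin P ∧ WF atoms P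
decreasing_by
  all_goals simp_wf
  all_goals try rename_i h; try have := List.sizeOf_lt_of_mem h
  all_goals omega

/-- a safe plan: at every join, all subplans have the same head variables -/
def Safe (atoms : A → Finset V) : Plan A V → Prop
  | .atom _ => True
  | .proj _ P => Safe atoms P
  | .join Ps => (∀ P ∈ Ps, Safe atoms P) ∧
      ∀ P ∈ Ps, ∀ Q ∈ Ps, hvar atoms P = hvar atoms Q
decreasing_by
  all_goals simp_wf
  all_goals try rename_i h; try have := List.sizeOf_lt_of_mem h
  all_goals omega

/-- `P` is a (well-formed) query plan for the query with atoms `atoms` and head variables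
`H`: it uses every atom exactly once and its output head variables are exactly `H`
(for a Boolean query, `H = ∅`, i.e. all existential variables are projected away). -/
def IsPlanFor [Fintype A] (atoms : A → Finset V) (H : Finset V) (P : Plan A V) : Prop :=
  WF atoms P ∧ atomsOf P = (Finset.univ : Finset A).val ∧ hvar atoms P = H

/-- the join variables: the union of the head variables of a list of subplans -/
def joinVars (atoms : A → Finset V) (Ps : List (Plan A V)) : Finset V :=
  (Ps.map (hvar atoms)).foldr (· ∪ ·) ∅

/-- Identification of plans up to join order, flattening of nested joins, and removal of
trivial (identity) projections. -/
inductive Equiv (atoms : A → Finset V) : Plan A V → Plan A V → Prop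
  | refl (P) : Equiv atoms P P
  | symm {P Q} : Equiv atoms P Q → Equiv atoms Q P
  | trans {P Q R} : Equiv atoms P Q → Equiv atoms Q R → Equiv atoms P R
  | projCongr (hv) {P Q} : Equiv atoms P Q → Equiv atoms (.proj hv P) (.proj hv Q)
  | joinCongr {Ps Qs} : List.Forall₂ (Equiv atoms) Ps Qs →
      Equiv atoms (.join Ps) (.join Qs)
  | joinPerm {Ps Qs} : Ps.Perm Qs → Equiv atoms (.join Ps) (.join Qs)
  | joinFlatten (Ps Qs Rs) :
      Equiv atoms (.join (Ps ++ .join Qs :: Rs)) (.join (Ps ++ Qs ++ Rs))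
  | projTriv {P} (hv) (h : hv = hvar atoms P) : Equiv atoms (.proj hv P) P

/-- The extensional score semantics of a plan evaluated on the database `D`: output tuples
are represented by total valuations `ν : V → dom` (only the values on the head variables
matter; duplicates are represented canonically by the default value `d₀` outside the head
variables).  Joins multiply scores, and duplicate-eliminating projections combine the
scores `s_1, …, s_n` of the tuples projecting to a common output tuple to
`1 - ∏ (1 - s_i)`. -/
def score [Fintype V] [Fintype dom] (atoms : A → Finset V) (D : DB atoms dom) (d₀ : dom) :
    Plan A V → (V → dom) → ℝ
  | .atom i, ν =>
      if restrict atoms i ν ∈ D.tuples i then D.prob i (restrict atoms i ν) else 0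
  | .proj hv P, ν =>
      1 - ∏ μ ∈ Finset.univ.filter (fun μ : V → dom =>
            (∀ v : V, v ∉ hvar atoms P → μ v = d₀) ∧ ∀ v ∈ hv, μ v = ν v),
          (1 - score atoms D d₀ P μ)
  | .join Ps, ν => (Ps.attach.map (fun P => score atoms D d₀ P.1 ν)).prod
decreasing_by
  all_goals simp_wf
  all_goals try have := List.sizeOf_lt_of_mem P.2
  all_goals omega

/-- the score of a Boolean plan -/
def bscore [Fintype V] [Fintype dom] [Inhabited dom] (atoms : A → Finset V)
    (D : DB atoms dom) (P : Plan A V) : ℝ :=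
  score atoms D default P (fun _ => default)

/-- Dropping the dissociated variables from a plan (for a dissociated query) to obtain the
corresponding plan `P^Δ` for the original query: every projection list is restricted to
the variables actually available in the original query. -/
def eraseTo (atoms : A → Finset V) : Plan A V → Plan A V
  | .atom i => .atom i
  | .proj hv P => .proj (hv ∩ hvar atoms (eraseTo atoms P)) (eraseTo atoms P)
  | .join Ps => .join (Ps.attach.map (fun P => eraseTo atoms P.1))
decreasing_by
  all_goals simp_wf
  all_goals try have := List.sizeOf_lt_of_mem P.2
  all_goals omega

/-- The dissociation `Δ^P` corresponding to a plan `P`: for each join operator with join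
variables `JVar = ⋃_j HVar(P_j)`, every relation occurring in subplan `P_j` receives the
variables `JVar ∖ HVar(P_j)`. -/
def dissOf (atoms : A → Finset V) : Plan A V → A → Finset V
  | .atom _ => fun _ => ∅
  | .proj _ P => dissOf atoms P
  | .join Ps => fun i =>
      Ps.attach.foldr (fun P acc =>
        (if i ∈ atomsOf P.1 then
            (joinVars atoms Ps \ hvar atoms P.1) ∪ dissOf atoms P.1 i
          else ∅) ∪ acc) ∅
decreasing_by
  all_goals simp_wf
  all_goals try have := List.sizeOf_lt_of_mem P.2
  all_goals omega

end Plan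

/-- The recursive algorithm `MP` enumerating the minimal query plans of the query with
atom set `S` and head variables `H` (head variables are treated as constants):
* if the query has a single atom, return the projection of that atom onto the head
  variables;
* if the query (after removing the head variables) is disconnected, return any join of
  minimal plans of its connected components (each component keeping the head variables
  occurring in it);
* otherwise, for any minimal cut-set `ys` of the query minus its head variables, return
  the plan projecting `ys` away from any minimal plan of the query with head variables
  `H ∪ ys`. -/
inductive MPrel (atoms : A → Finset V) : Finset A → Finset V → Plan A V → Prop
  | single (i : A) (H : Finset V) : MPrel atoms {i} H (.proj H (.atom i))
  | disc (S : Finset A) (H : Finset V) (parts : List (Finset A)) (Ps : List (Plan A V))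
      (hdup : parts.Nodup) (hlen : 2 ≤ parts.length)
      (hparts : ∀ T : Finset A, T ∈ parts ↔ IsComp (fun i => atoms i \ H) S T)
      (hlen2 : parts.length = Ps.length)
      (hPs : ∀ n : ℕ, ∀ h1 : n < parts.length, ∀ h2 : n < Ps.length,
        MPrel atoms parts[n] (H ∩ (parts[n]).sup atoms) Ps[n]) :
      MPrel atoms S H (.join Ps)
  | conn (S : Finset A) (H : Finset V) (ys : Finset V) (P : Plan A V)
      (hcard : 2 ≤ S.card)
      (hconn : ¬ Disconn (fun i => atoms i \ H) S)
      (hcut : MinCut (fun i => atoms i \ H) S ys)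
      (hP : MPrel atoms S (H ∪ ys) P) :
      MPrel atoms S H (.proj H P)

/-!
Split a world of `X'` into its restrictions to the fibers `θ⁻¹(x)`. Then `P[F]` is the
expectation of `F'` when, independently for each `x`, the whole fiber of `x` is true with
probability `p x` and false otherwise, whereas `P[F']` is the expectation of `F'` when each
variable of every fiber is independently true with probability `p x`. Replacing the coupled law
by the independent one on a single fiber does not decrease the expectation: with the other
fibers fixed, `F'` is a monotone function of the fiber which, if it holds on the all-true fiber
but not on the all-false one, is implied by a single variable of the fiber (the only variable
of the fiber in a satisfied prime implicant), and that variable is true with probability `p x`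
under both laws. Doing this fiber by fiber proves the theorem.
-/

open Finset Function

section ProductSums

variable {ι : Type*} [Fintype ι] {κ : ι → Type*} [∀ i, Fintype (κ i)]

theorem sum_prod_mul_eq_sum_sum_piSplitAt (m : ∀ i, κ i → ℝ) (Φ : (∀ i, κ i) → ℝ) (i : ι) :
    ∑ ζ, (∏ j, m j (ζ j)) * Φ ζ =
      ∑ η : ∀ j : {j // j ≠ i}, κ j, (∏ j : {j // j ≠ i}, m j (η j)) *
        ∑ a, m i a * Φ ((Equiv.piSplitAt i κ).symm (a, η)) := by
  rw [← (Equiv.piSplitAt i κ).symm.sum_comp, Fintype.sum_prod_type, Finset.sum_comm]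
  refine sum_congr rfl fun η _ => ?_
  rw [mul_sum]
  refine sum_congr rfl fun a _ => ?_
  have hrest : ∏ j : {j // j ≠ i}, m j ((Equiv.piSplitAt i κ).symm (a, η) j) =
      ∏ j : {j // j ≠ i}, m j.1 (η j) :=
    prod_congr rfl fun j _ => by simp [j.2]
  rw [Fintype.prod_eq_mul_prod_subtype_ne _ i, hrest]
  simp only [Equiv.piSplitAt_symm_apply, dif_pos]
  ring

theorem sum_prod_mul_le_update (μ : ∀ i, κ i → ℝ) (i : ι) (ν : κ i → ℝ)
    (hμ : ∀ j, j ≠ i → ∀ a, 0 ≤ μ j a) (Φ : (∀ i, κ i) → ℝ)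
    (h : ∀ ζ, ∑ a, μ i a * Φ (update ζ i a) ≤ ∑ a, ν a * Φ (update ζ i a)) :
    ∑ ζ, (∏ j, μ j (ζ j)) * Φ ζ ≤ ∑ ζ, (∏ j, update μ i ν j (ζ j)) * Φ ζ := by
  rw [sum_prod_mul_eq_sum_sum_piSplitAt _ _ i, sum_prod_mul_eq_sum_sum_piSplitAt _ _ i]
  refine sum_le_sum fun η _ => ?_
  have hrest : ∏ j : {j // j ≠ i}, update μ i ν j (η j) = ∏ j : {j // j ≠ i}, μ j (η j) :=
    prod_congr rfl fun j _ => by rw [update_of_ne j.2]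
  rw [hrest, update_self]
  refine mul_le_mul_of_nonneg_left ?_ (prod_nonneg fun j _ => hμ j j.2 _)
  rcases isEmpty_or_nonempty (κ i) with hempty | ⟨⟨a₀⟩⟩
  · simp
  have hupd : ∀ a, update ((Equiv.piSplitAt i κ).symm (a₀, η)) i a =
      (Equiv.piSplitAt i κ).symm (a, η) := fun a =>
    (Equiv.piSplitAt i κ).injective (Prod.ext (by simp) (funext fun j => by simp [j.2]))
  simpa only [hupd] using h ((Equiv.piSplitAt i κ).symm (a₀, η))

theorem sum_prod_mul_le_sum_prod_mul (μ ν : ∀ i, κ i → ℝ) (hμ : ∀ i a, 0 ≤ μ i a)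
    (hν : ∀ i a, 0 ≤ ν i a) (Φ : (∀ i, κ i) → ℝ)
    (h : ∀ i ζ, ∑ a, μ i a * Φ (update ζ i a) ≤ ∑ a, ν i a * Φ (update ζ i a)) :
    ∑ ζ, (∏ i, μ i (ζ i)) * Φ ζ ≤ ∑ ζ, (∏ i, ν i (ζ i)) * Φ ζ := by
  suffices ∀ s : Finset ι,
      ∑ ζ, (∏ i, μ i (ζ i)) * Φ ζ ≤ ∑ ζ, (∏ i, s.piecewise ν μ i (ζ i)) * Φ ζ by
    simpa using this univ
  intro s
  induction s using Finset.induction_on with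
  | empty => simp
  | insert i s hi ih =>
    refine ih.trans ?_
    rw [piecewise_insert]
    refine sum_prod_mul_le_update _ i _ (fun j _ a => ?_) Φ (by simpa [hi] using h i)
    by_cases hj : j ∈ s <;> simp [hj, hν, hμ]

theorem sum_prod_pushforward_mul [∀ i, DecidableEq (κ i)] {β : Type*} [Fintype β]
    (μ : ι → β → ℝ) (f : ∀ i, β → κ i) (Φ : (∀ i, κ i) → ℝ) :
    ∑ ζ, (∏ i, ∑ b, μ i b * if ζ i = f i b then 1 else 0) * Φ ζ =
      ∑ ω : ι → β, (∏ i, μ i (ω i)) * Φ (fun i => f i (ω i)) := by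
  simp_rw [Fintype.prod_sum, prod_mul_distrib, prod_boole, sum_mul, mul_assoc]
  rw [sum_comm]
  simp [← funext_iff]

end ProductSums

section Weights

variable {S : Type*} [Fintype S]

def boolWeight (q : ℝ) (b : Bool) : ℝ := if b = true then q else 1 - q

def indepWeight (q : ℝ) (ξ : S → Bool) : ℝ := ∏ s, boolWeight q (ξ s)

def coupledWeight (q : ℝ) (ξ : S → Bool) : ℝ :=
  ∑ b, boolWeight q b * if ξ = (fun _ => b) then 1 else 0

variable {q : ℝ}

theorem boolWeight_nonneg (hq : 0 ≤ q ∧ q ≤ 1) (b : Bool) : 0 ≤ boolWeight q b := by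
  cases b <;> simp [boolWeight] <;> linarith

theorem indepWeight_nonneg (hq : 0 ≤ q ∧ q ≤ 1) (ξ : S → Bool) : 0 ≤ indepWeight q ξ :=
  prod_nonneg fun s _ => boolWeight_nonneg hq (ξ s)

theorem coupledWeight_nonneg (hq : 0 ≤ q ∧ q ≤ 1) (ξ : S → Bool) : 0 ≤ coupledWeight q ξ :=
  sum_nonneg fun b _ => mul_nonneg (boolWeight_nonneg hq b) (by split_ifs <;> norm_num)

variable [DecidableEq S]

theorem sum_indepWeight (q : ℝ) : ∑ ξ : S → Bool, indepWeight q ξ = 1 := by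
  simp only [indepWeight]
  rw [← Fintype.prod_sum (fun _ b => boolWeight q b)]
  simp [boolWeight]

theorem sum_indepWeight_mul_ite_apply (q : ℝ) (s₀ : S) :
    ∑ ξ : S → Bool, indepWeight q ξ * (if ξ s₀ = true then 1 else 0) = q := by
  have hfactor : ∀ ξ : S → Bool, indepWeight q ξ * (if ξ s₀ = true then 1 else 0) =
      ∏ s, boolWeight q (ξ s) * (if s = s₀ then (if ξ s = true then 1 else 0) else 1) := by
    intro ξ
    rw [prod_mul_distrib, prod_ite_eq']
    simp [indepWeight]
  rw [sum_congr rfl fun ξ _ => hfactor ξ, ← Fintype.prod_sum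
    (fun s b => boolWeight q b * (if s = s₀ then (if b = true then 1 else 0) else 1))]
  have hfactor_sum : ∀ s, ∑ b, boolWeight q b *
      (if s = s₀ then (if b = true then 1 else 0) else 1) = if s = s₀ then q else 1 := by
    intro s
    split_ifs <;> simp [boolWeight]
  rw [prod_congr rfl fun s _ => hfactor_sum s, prod_ite_eq']
  simp

theorem sum_coupledWeight_mul (q : ℝ) (h : (S → Bool) → ℝ) :
    ∑ ξ, coupledWeight q ξ * h ξ = q * h ⊤ + (1 - q) * h ⊥ := by
  simp_rw [coupledWeight, sum_mul, mul_assoc, ite_mul, one_mul, zero_mul]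
  rw [sum_comm]
  simp [boolWeight]
  rfl

theorem sum_coupledWeight_le_sum_indepWeight (hq : 0 ≤ q ∧ q ≤ 1) {G : (S → Bool) → Prop}
    (hG : Monotone G) (hpivot : G ⊤ → G ⊥ ∨ ∃ s, ∀ ξ, ξ s = true → G ξ) :
    ∑ ξ, coupledWeight q ξ * (if G ξ then 1 else 0) ≤
      ∑ ξ, indepWeight q ξ * (if G ξ then 1 else 0) := by
  rw [sum_coupledWeight_mul]
  by_cases hbot : G ⊥
  · have hall : ∀ ξ, G ξ := fun ξ => hG bot_le hbot
    simp [hall, sum_indepWeight]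
  by_cases htop : G ⊤
  · obtain ⟨s, hs⟩ := (hpivot htop).resolve_left hbot
    calc q * (if G ⊤ then 1 else 0) + (1 - q) * (if G ⊥ then 1 else 0)
        = ∑ ξ : S → Bool, indepWeight q ξ * (if ξ s = true then 1 else 0) := by
          rw [sum_indepWeight_mul_ite_apply, if_pos htop, if_neg hbot]
          ring
      _ ≤ ∑ ξ, indepWeight q ξ * (if G ξ then 1 else 0) := by
          refine sum_le_sum fun ξ _ => mul_le_mul_of_nonneg_left ?_ (indepWeight_nonneg hq ξ)
          by_cases hξ : ξ s = true
          · simp [hξ, hs]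
          · rw [if_neg hξ]
            split_ifs <;> norm_num
  · simp only [htop, hbot, if_false, mul_zero, add_zero]
    exact sum_nonneg fun ξ _ =>
      mul_nonneg (indepWeight_nonneg hq ξ) (by split_ifs <;> norm_num)

end Weights

section DNF

variable {Y : Type*}

def DNFHolds (F : Finset (Finset Y)) (ω : Y → Bool) : Prop :=
  ∃ T ∈ F, ∀ y ∈ T, ω y = true

theorem dnfProb_eq_sum [Fintype Y] (p : Y → ℝ) (F : Finset (Finset Y)) :
    dnfProb p F = ∑ ω, (∏ y, boolWeight (p y) (ω y)) * if DNFHolds F ω then 1 else 0 := by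
  unfold dnfProb DNFHolds boolWeight
  -- the two sides differ only in the `Decidable` instance of the `if`
  congr! 3

theorem DNFHolds.monotone (F : Finset (Finset Y)) : Monotone (DNFHolds F) :=
  fun _ _ hle ⟨T, hT, hall⟩ => ⟨T, hT, fun y hy => Bool.le_iff_imp.1 (hle y) (hall y hy)⟩

theorem DNFHolds.exists_isPrimeImplicant {F : Finset (Finset Y)} {ω : Y → Bool}
    (h : DNFHolds F ω) : ∃ T, IsPrimeImplicant F T ∧ ∀ y ∈ T, ω y = true := by
  obtain ⟨T, hT, hall⟩ := h
  obtain ⟨S, hST, hS⟩ := exists_minimal_le_of_wellFoundedLT (· ∈ F) T hT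
  exact ⟨S, ⟨hS.prop, fun S' hS' hle => le_antisymm hle (hS.2 hS' hle)⟩,
    fun y hy => hall y (hST hy)⟩

theorem dnfHolds_image_iff {X : Type*} (θ : Y → X) (F : Finset (Finset Y)) (ω : X → Bool) :
    DNFHolds (F.image (image θ)) ω ↔ DNFHolds F (ω ∘ θ) := by
  simp [DNFHolds]

end DNF

section Fibers

variable {X X' : Type*} (θ : X' → X) {β : Type*}

def piFiberEquiv (θ : X' → X) (β : Type*) : (∀ x, {x' // θ x' = x} → β) ≃ (X' → β) where
  toFun ζ x' := ζ (θ x') ⟨x', rfl⟩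
  invFun ω _ s := ω s
  left_inv ζ := by
    funext x ⟨x', hx'⟩
    subst hx'
    rfl
  right_inv _ := rfl

theorem piFiberEquiv_update_of_eq (ζ : ∀ x, {x' // θ x' = x} → β) {x : X}
    (ξ : {x' // θ x' = x} → β) {x' : X'} (h : θ x' = x) :
    piFiberEquiv θ β (update ζ x ξ) x' = ξ ⟨x', h⟩ := by
  subst h
  simp [piFiberEquiv]

theorem piFiberEquiv_update_of_ne (ζ : ∀ x, {x' // θ x' = x} → β) {x : X}
    (ξ : {x' // θ x' = x} → β) {x' : X'} (h : θ x' ≠ x) :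
    piFiberEquiv θ β (update ζ x ξ) x' = piFiberEquiv θ β ζ x' := by
  simp [piFiberEquiv, update_of_ne h]

theorem piFiberEquiv_monotone [Preorder β] : Monotone (piFiberEquiv θ β) :=
  fun _ _ hle x' => hle (θ x') ⟨x', rfl⟩

theorem prod_piFiberEquiv [Fintype X] [Fintype X'] (w : X → β → ℝ)
    (ζ : ∀ x, {x' // θ x' = x} → β) :
    ∏ x', w (θ x') (piFiberEquiv θ β ζ x') = ∏ x, ∏ s : {x' // θ x' = x}, w x (ζ x s) := by
  rw [← Fintype.prod_fiberwise θ]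
  refine prod_congr rfl fun x _ => prod_congr rfl fun s _ => ?_
  obtain ⟨x', rfl⟩ := s
  rfl

end Fibers

section Dissociation

variable {X X' : Type*} (p : X → ℝ) (θ : X' → X) (F' : Finset (Finset X'))

theorem dnfHolds_update_bot_or_exists_pivot
    (hprime : ∀ T', IsPrimeImplicant F' T' → Set.InjOn θ ↑T')
    (ζ : ∀ x, {x' // θ x' = x} → Bool) (x : X)
    (htop : DNFHolds F' (piFiberEquiv θ Bool (update ζ x ⊤))) :
    DNFHolds F' (piFiberEquiv θ Bool (update ζ x ⊥)) ∨
      ∃ s, ∀ ξ, ξ s = true → DNFHolds F' (piFiberEquiv θ Bool (update ζ x ξ)) := by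
  obtain ⟨T', hT'prime, hT'⟩ := htop.exists_isPrimeImplicant
  by_cases hmeet : ∃ x'₀ ∈ T', θ x'₀ = x
  · obtain ⟨x'₀, hx'₀, hθ⟩ := hmeet
    refine Or.inr ⟨⟨x'₀, hθ⟩, fun ξ hξ => ⟨T', hT'prime.1, fun x' hx' => ?_⟩⟩
    by_cases hx'x : θ x' = x
    · obtain rfl : x' = x'₀ := hprime T' hT'prime hx' hx'₀ (hx'x.trans hθ.symm)
      rwa [piFiberEquiv_update_of_eq θ ζ ξ hx'x]
    · rw [piFiberEquiv_update_of_ne θ ζ ξ hx'x, ← piFiberEquiv_update_of_ne θ ζ ⊤ hx'x]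
      exact hT' x' hx'
  · simp only [not_exists, not_and] at hmeet
    refine Or.inl ⟨T', hT'prime.1, fun x' hx' => ?_⟩
    rw [piFiberEquiv_update_of_ne θ ζ _ (hmeet x' hx'),
      ← piFiberEquiv_update_of_ne θ ζ ⊤ (hmeet x' hx')]
    exact hT' x' hx'

variable [Fintype X] [Fintype X']

theorem dnfProb_comp_eq_sum_indepWeight :
    dnfProb (fun x' => p (θ x')) F' = ∑ ζ, (∏ x, indepWeight (p x) (ζ x)) *
      if DNFHolds F' (piFiberEquiv θ Bool ζ) then 1 else 0 := by
  rw [dnfProb_eq_sum, ← (piFiberEquiv θ Bool).sum_comp]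
  simp only [prod_piFiberEquiv θ (fun x => boolWeight (p x)), indepWeight]

theorem dnfProb_image_eq_sum_coupledWeight :
    dnfProb p (F'.image (image θ)) = ∑ ζ, (∏ x, coupledWeight (p x) (ζ x)) *
      if DNFHolds F' (piFiberEquiv θ Bool ζ) then 1 else 0 := by
  simp only [coupledWeight]
  rw [sum_prod_pushforward_mul (κ := fun x => {x' // θ x' = x} → Bool)
    (fun x => boolWeight (p x)) (fun _ b _ => b), dnfProb_eq_sum]
  simp only [dnfHolds_image_iff]
  rfl

end Dissociation

/-- Oblivious DNF upper bound.  Let `F` be a monotone DNF over the finite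
variable set `X` with probabilities `p : X → [0,1]`, and let `F'` (over `X'`) be a
dissociation of `F` through the substitution `θ : X' → X` (i.e. `F'[θ] = F`) such that no
two distinct dissociations of a variable occur in the same prime implicant of `F'`.
Then `P[F] ≤ P[F']`, where `p'(X') = p(θ(X'))`. -/
theorem dnf_dissociation_upper_bound
    {X X' : Type*} [Fintype X] [Fintype X']
    (p : X → ℝ) (hp : ∀ x : X, 0 ≤ p x ∧ p x ≤ 1)
    (F : Finset (Finset X)) (F' : Finset (Finset X')) (θ : X' → X)
    (hsubst : F'.image (Finset.image θ) = F)
    (hprime : ∀ T' : Finset X', IsPrimeImplicant F' T' → Set.InjOn θ ↑T') :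
    dnfProb p F ≤ dnfProb (fun x' => p (θ x')) F' := by
  subst hsubst
  rw [dnfProb_image_eq_sum_coupledWeight, dnfProb_comp_eq_sum_indepWeight]
  refine sum_prod_mul_le_sum_prod_mul _ _ (fun x => coupledWeight_nonneg (hp x))
    (fun x => indepWeight_nonneg (hp x)) _ fun x ζ => ?_
  have hmono : Monotone fun ξ => DNFHolds F' (piFiberEquiv θ Bool (update ζ x ξ)) :=
    (DNFHolds.monotone F').comp ((piFiberEquiv_monotone θ).comp fun _ _ h => by simpa using h)
  exact sum_coupledWeight_le_sum_indepWeight (hp x) hmono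
    (dnfHolds_update_bot_or_exists_pivot θ F' hprime ζ x)

end

end PDB
end

section
/- Let F be a monotone DNF Boolean formula over a finite variable set X with probability function p : X → [0,1], and let F' be a monotone DNF dissociation of F through θ : X' → X such that no two distinct dissociations of the same variable occur in one prime implicant of F'. If every dissociated variable X ∈ X (i.e., every X with |θ⁻¹(X)| ≥ 2) is deterministic, meaning p(X) = 0 or p(X) = 1, then P[F] = P[F']. -/
open scoped Classical

namespace PDB

noncomputable section

variable {A V dom : Type*}

/-- The total weight of the fiber of valuations `ω : X → Bool` whose pullback along `θ`
is a given `ω' : X' → Bool` equals the product weight of `ω'`, provided every variable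
with at least two `θ`-preimages is deterministic. -/
lemma fiber_mass {X X' : Type*} [Fintype X] [Fintype X'] (p : X → ℝ) (θ : X' → X)
    (hdet : ∀ x : X, (∃ u v : X', u ≠ v ∧ θ u = x ∧ θ v = x) → p x = 0 ∨ p x = 1)
    (ω' : X' → Bool) :
    ∑ ω ∈ Finset.univ.filter (fun ω : X → Bool => (fun x' => ω (θ x')) = ω'),
        ∏ x, (if ω x = true then p x else 1 - p x)
      = ∏ x' : X', (if ω' x' = true then p (θ x') else 1 - p (θ x')) := by
  classical
  by_cases hcons : ∀ u v : X', θ u = θ v → ω' u = ω' v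
  · -- consistent case
    set c : X → Bool := fun x => if h : ∃ x', θ x' = x then ω' h.choose else false with hcdef
    have hc : ∀ x' : X', c (θ x') = ω' x' := by
      intro x'
      have h : ∃ y : X', θ y = θ x' := ⟨x', rfl⟩
      simp only [hcdef, dif_pos h]
      exact hcons _ _ h.choose_spec
    set f : X → Bool → ℝ := fun x b =>
      if (∃ x', θ x' = x) ∧ b ≠ c x then 0 else if b = true then p x else 1 - p x with hfdef
    have step1 :
        (∑ ω ∈ Finset.univ.filter (fun ω : X → Bool => (fun x' => ω (θ x')) = ω'),
            ∏ x, (if ω x = true then p x else 1 - p x))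
          = ∑ ω : X → Bool, ∏ x, f x (ω x) := by
      rw [Finset.sum_filter]
      refine Finset.sum_congr rfl fun ω _ => ?_
      by_cases hω : (fun x' => ω (θ x')) = ω'
      · rw [if_pos hω]
        refine Finset.prod_congr rfl fun x _ => ?_
        rw [hfdef]
        refine (if_neg ?_).symm
        rintro ⟨⟨x', rfl⟩, hne⟩
        exact hne ((congrFun hω x').trans (hc x').symm)
      · rw [if_neg hω]
        have hexx : ∃ x', ω (θ x') ≠ ω' x' := by
          by_contra hno
          push_neg at hno
          exact hω (funext hno)
        obtain ⟨x', hx'⟩ := hexx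
        symm
        apply Finset.prod_eq_zero (Finset.mem_univ (θ x'))
        rw [hfdef]
        exact if_pos ⟨⟨x', rfl⟩, by rw [hc x']; exact hx'⟩
    rw [step1, ← Fintype.prod_sum]
    have hsplit : ∀ x : X,
        (∑ b : Bool, f x b)
          = if ∃ x', θ x' = x then (if c x = true then p x else 1 - p x) else 1 := by
      intro x
      by_cases hx : ∃ x', θ x' = x
      · cases hcx : c x <;> simp [hfdef, hx, hcx]
      · simp [hfdef, hx]
    rw [Finset.prod_congr rfl fun x _ => hsplit x]
    have hRHS :
        (∏ x' : X', (if ω' x' = true then p (θ x') else 1 - p (θ x')))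
          = ∏ x : X, (if c x = true then p x else 1 - p x) ^
              (Finset.univ.filter (fun x' : X' => θ x' = x)).card := by
      rw [show (∏ x' : X', (if ω' x' = true then p (θ x') else 1 - p (θ x')))
            = ∏ x' : X', (fun x => if c x = true then p x else 1 - p x) (θ x') from
          Finset.prod_congr rfl fun x' _ => by rw [← hc x']]
      rw [← Finset.prod_fiberwise' Finset.univ θ
        (fun x => if c x = true then p x else 1 - p x)]
      exact Finset.prod_congr rfl fun x _ => Finset.prod_const _
    rw [hRHS]
    refine Finset.prod_congr rfl fun x _ => ?_
    set N : ℕ := (Finset.univ.filter (fun x' : X' => θ x' = x)).card with hN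
    by_cases hx : ∃ x', θ x' = x
    · rw [if_pos hx]
      have hN1 : 1 ≤ N := Finset.card_pos.2 ⟨hx.choose, by simp [hx.choose_spec]⟩
      rcases Nat.lt_or_ge N 2 with h2 | h2
      · have : N = 1 := by omega
        rw [this, pow_one]
      · obtain ⟨u, hu, v, hv, huv⟩ := Finset.one_lt_card.1 h2
        simp only [Finset.mem_filter, Finset.mem_univ, true_and] at hu hv
        have hd := hdet x ⟨u, v, huv, hu, hv⟩
        have hh : (if c x = true then p x else 1 - p x) = 0 ∨
            (if c x = true then p x else 1 - p x) = 1 := by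
          rcases hd with h | h <;> cases hcx : c x <;> simp [hcx, h]
        rcases hh with hh | hh
        · rw [hh, zero_pow (by omega)]
        · rw [hh, one_pow]
    · rw [if_neg hx]
      have : N = 0 := by
        rw [hN, Finset.card_eq_zero, Finset.filter_eq_empty_iff]
        exact fun x' _ h => hx ⟨x', h⟩
      rw [this, pow_zero]
  · -- inconsistent case: both sides are zero
    push_neg at hcons
    obtain ⟨u, v, huv, hne⟩ := hcons
    have hune : u ≠ v := fun h => hne (h ▸ rfl)
    have hd := hdet (θ u) ⟨u, v, hune, rfl, huv.symm⟩
    have hempty : (Finset.univ.filter (fun ω : X → Bool => (fun x' => ω (θ x')) = ω')) = ∅ := by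
      rw [Finset.filter_eq_empty_iff]
      intro ω _ hω
      exact hne (((congrFun hω u).symm.trans (by rw [huv])).trans (congrFun hω v))
    rw [hempty, Finset.sum_empty]
    symm
    rcases hd with h | h
    · cases hu : ω' u
      · have hv : ω' v = true := by
          cases hv : ω' v
          · exact absurd (hu.trans hv.symm) hne
          · rfl
        apply Finset.prod_eq_zero (Finset.mem_univ v)
        rw [hv, if_pos rfl, ← huv, h]
      · apply Finset.prod_eq_zero (Finset.mem_univ u)
        rw [hu, if_pos rfl, h]
    · cases hu : ω' u
      · apply Finset.prod_eq_zero (Finset.mem_univ u)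
        rw [hu]
        simp [h]
      · have hv : ω' v = false := by
          cases hv : ω' v
          · rfl
          · exact absurd (hu.trans hv.symm) hne
        apply Finset.prod_eq_zero (Finset.mem_univ v)
        rw [hv, ← huv]
        simp [h]

/-- Pushforward identity: summing a function of the pullback `ω ∘ θ` against the product
weights on `X → Bool` equals summing it against the product weights on `X' → Bool`,
provided dissociated variables are deterministic. -/
lemma pushforward_sum {X X' : Type*} [Fintype X] [Fintype X'] (p : X → ℝ) (θ : X' → X)
    (hdet : ∀ x : X, (∃ u v : X', u ≠ v ∧ θ u = x ∧ θ v = x) → p x = 0 ∨ p x = 1)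
    (g : (X' → Bool) → ℝ) :
    ∑ ω : X → Bool, (∏ x, if ω x = true then p x else 1 - p x) * g (fun x' => ω (θ x'))
      = ∑ ω' : X' → Bool,
          (∏ x', if ω' x' = true then p (θ x') else 1 - p (θ x')) * g ω' := by
  classical
  rw [← Finset.sum_fiberwise Finset.univ (fun ω : X → Bool => (fun x' => ω (θ x')))
    (fun ω => (∏ x, if ω x = true then p x else 1 - p x) * g (fun x' => ω (θ x')))]
  refine Finset.sum_congr rfl fun ω' _ => ?_
  have hcongr : ∀ ω ∈ Finset.univ.filter (fun ω : X → Bool => (fun x' => ω (θ x')) = ω'),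
      (∏ x, if ω x = true then p x else 1 - p x) * g (fun x' => ω (θ x'))
        = (∏ x, if ω x = true then p x else 1 - p x) * g ω' := by
    intro ω hω
    rw [(Finset.mem_filter.1 hω).2]
  rw [Finset.sum_congr rfl hcongr, ← Finset.sum_mul, fiber_mass p θ hdet ω']

/-- Oblivious DNF bounds, exactness for deterministic variables.
Let `F'` be a monotone DNF dissociation of `F` through `θ : X' → X` such that no two
distinct dissociations of the same variable occur in one prime implicant of `F'`.
If every dissociated variable `x` (one with at least two `θ`-preimages) is deterministic,
i.e. `p x = 0` or `p x = 1`, then `P[F] = P[F']`. -/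
theorem dnf_dissociation_deterministic_exact
    {X X' : Type*} [Fintype X] [Fintype X']
    (p : X → ℝ) (hp : ∀ x : X, 0 ≤ p x ∧ p x ≤ 1)
    (F : Finset (Finset X)) (F' : Finset (Finset X')) (θ : X' → X)
    (hsubst : F'.image (Finset.image θ) = F)
    (hprime : ∀ T' : Finset X', IsPrimeImplicant F' T' → Set.InjOn θ ↑T')
    (hdet : ∀ x : X, (∃ u v : X', u ≠ v ∧ θ u = x ∧ θ v = x) → p x = 0 ∨ p x = 1) :
    dnfProb p F = dnfProb (fun x' => p (θ x')) F' := by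
  classical
  subst hsubst
  unfold dnfProb
  rw [← pushforward_sum p θ hdet
    (fun ω' => if ∃ T' ∈ F', ∀ x' ∈ T', ω' x' = true then (1 : ℝ) else 0)]
  refine Finset.sum_congr rfl fun ω _ => ?_
  congr 1
  congr 1
  simp only [eq_iff_iff]
  constructor
  · rintro ⟨T, hT, hsat⟩
    rcases Finset.mem_image.1 hT with ⟨T', hT', rfl⟩
    exact ⟨T', hT', fun x' hx' => hsat _ (Finset.mem_image_of_mem θ hx')⟩
  · rintro ⟨T', hT', hsat⟩
    refine ⟨T'.image θ, Finset.mem_image_of_mem _ hT', ?_⟩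
    intro x hx
    rcases Finset.mem_image.1 hx with ⟨x', hx', rfl⟩
    exact hsat x' hx'

end

end PDB
end

section
/- A Boolean self-join-free conjunctive query q is hierarchical if and only if one of the following holds: (1) q consists of a single atom; (2) q has k ≥ 2 connected components, all of which are hierarchical; or (3) q has a separator variable x (an existential variable occurring in every atom) and q − x is hierarchical. -/
open scoped Classical

namespace PDB

noncomputable section

variable {A V dom : Type*}

section

open Finset

section Hierarchy

variable {atoms : A → Finset V} {S T : Finset A} {H : Finset V}

lemma mem_atOf {x : V} {i : A} : i ∈ atOf atoms S x ↔ i ∈ S ∧ x ∈ atoms i :=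
  mem_filter

lemma atOf_eq_inter_of_subset (hTS : T ⊆ S) (x : V) :
    atOf atoms T x = atOf atoms S x ∩ T := by
  ext i
  simp only [mem_atOf, mem_inter]
  exact ⟨fun h => ⟨⟨hTS h.1, h.2⟩, h.1⟩, fun h => ⟨h.2, h.1.2⟩⟩

lemma atOf_eq_of_subset {x : V} (hx : atOf atoms S x ⊆ T) (hTS : T ⊆ S) :
    atOf atoms T x = atOf atoms S x := by
  rw [atOf_eq_inter_of_subset hTS, inter_eq_left.mpr hx]

lemma HierOn.mono (h : HierOn atoms S H) (hTS : T ⊆ S) : HierOn atoms T H := by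
  intro x hx y hy
  simp only [atOf_eq_inter_of_subset hTS]
  rcases h x hx y hy with hxy | hxy | hxy
  · exact Or.inl (inter_subset_inter_right hxy)
  · refine Or.inr (Or.inl ?_)
    rw [inter_inter_inter_comm, hxy, empty_inter]
  · exact Or.inr (Or.inr (inter_subset_inter_right hxy))

lemma atOf_sdiff_singleton (x y : V) :
    atOf (fun i => atoms i \ {x}) S y = if y = x then ∅ else atOf atoms S y := by
  ext i
  by_cases hyx : y = x <;> simp [mem_atOf, hyx]

lemma hierOn_sdiff_singleton_iff {x : V} (hx : ∀ i ∈ S, x ∈ atoms i) :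
    HierOn (fun i => atoms i \ {x}) S H ↔ HierOn atoms S H := by
  have hxS : atOf atoms S x = S := filter_true_of_mem hx
  have hsub : ∀ y, atOf atoms S y ⊆ atOf atoms S x :=
    fun y => by rw [hxS]; exact filter_subset _ S
  constructor
  · intro h y hy z hz
    have hyz := h y hy z hz
    simp only [atOf_sdiff_singleton] at hyz
    by_cases hyx : y = x
    · subst hyx
      exact Or.inr (Or.inr (hsub z))
    by_cases hzx : z = x
    · subst hzx
      exact Or.inl (hsub y)
    simpa [hyx, hzx] using hyz
  · intro h y hy z hz
    simp only [atOf_sdiff_singleton]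
    by_cases hyx : y = x
    · simp [hyx]
    by_cases hzx : z = x
    · simp [hzx]
    simpa [hyx, hzx] using h y hy z hz

lemma hier_of_subsingleton [Fintype A] [Subsingleton A] : Hier atoms := by
  intro x _ y _
  by_cases hy : (atOf atoms univ y).Nonempty
  · obtain ⟨j, hj⟩ := hy
    refine Or.inl fun i _ => ?_
    rwa [Subsingleton.elim i j]
  · rw [not_nonempty_iff_eq_empty] at hy
    simp [hy]

end Hierarchy

section Connectivity

variable {atoms : A → Finset V} {S T U W : Finset A}

lemma exists_inter_nonempty_of_not_disconn (hS : ¬ Disconn atoms S) (hTS : T ⊆ S)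
    (hT : T.Nonempty) (hST : (S \ T).Nonempty) :
    ∃ i ∈ T, ∃ j ∈ S \ T, (atoms i ∩ atoms j).Nonempty := by
  by_contra! h
  exact hS ⟨T, hTS, hT, hST, h⟩

lemma not_disconn_singleton (i : A) : ¬ Disconn atoms {i} := by
  rintro ⟨T, hT, hTne, hrest, -⟩
  rw [hTne.subset_singleton_iff.mp hT, sdiff_self] at hrest
  exact not_nonempty_empty hrest

lemma not_disconn_atOf (x : V) : ¬ Disconn atoms (atOf atoms S x) := by
  rintro ⟨T, hT, ⟨i, hi⟩, ⟨j, hj⟩, hsep⟩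
  have hxj := (mem_atOf.mp (mem_sdiff.mp hj).1).2
  have hxi := (mem_atOf.mp (hT hi)).2
  exact notMem_empty x (hsep i hi j hj ▸ mem_inter.mpr ⟨hxi, hxj⟩)

lemma subset_or_disjoint_of_not_disconn (hU : ¬ Disconn atoms U) (hUS : U ⊆ S)
    (hsep : ∀ i ∈ T, ∀ j ∈ S \ T, atoms i ∩ atoms j = ∅) : U ⊆ T ∨ Disjoint U T := by
  by_contra! h
  obtain ⟨hUT, hdisj⟩ := h
  refine hU ⟨U ∩ T, inter_subset_left, not_disjoint_iff_nonempty_inter.mp hdisj,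
    ?_, fun i hi j hj => hsep i (mem_inter.mp hi).2 j ?_⟩
  · rw [sdiff_inter_self_left]
    exact sdiff_nonempty.mpr hUT
  · rw [sdiff_inter_self_left] at hj
    exact sdiff_subset_sdiff hUS le_rfl hj

lemma not_disconn_union (hU : ¬ Disconn atoms U) (hW : ¬ Disconn atoms W)
    (hUW : (U ∩ W).Nonempty) : ¬ Disconn atoms (U ∪ W) := by
  rintro ⟨T, hT, hTne, hrest, hsep⟩
  obtain ⟨k, hk⟩ := hUW
  obtain ⟨hkU, hkW⟩ := mem_inter.mp hk
  rcases subset_or_disjoint_of_not_disconn hU subset_union_left hsep with hUT | hUT <;>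
  rcases subset_or_disjoint_of_not_disconn hW subset_union_right hsep with hWT | hWT
  · exact not_nonempty_empty (sdiff_eq_empty_iff_subset.mpr
      (union_subset hUT hWT) ▸ hrest)
  · exact disjoint_left.mp hWT hkW (hUT hkU)
  · exact disjoint_left.mp hUT hkU (hWT hkW)
  · obtain ⟨i, hi⟩ := hTne
    rcases mem_union.mp (hT hi) with hiU | hiW
    · exact disjoint_left.mp hUT hiU hi
    · exact disjoint_left.mp hWT hiW hi

lemma exists_isComp_superset (hU : ¬ Disconn atoms U) (hUS : U ⊆ S) (hUne : U.Nonempty) :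
    ∃ T, IsComp atoms S T ∧ U ⊆ T := by
  obtain ⟨T, hT, hmax⟩ := exists_max_image
    (S.powerset.filter fun T => U ⊆ T ∧ ¬ Disconn atoms T) card
    ⟨U, mem_filter.mpr ⟨mem_powerset.mpr hUS, le_rfl, hU⟩⟩
  obtain ⟨hTS, hUT, hTconn⟩ := mem_filter.mp hT
  refine ⟨T, ⟨mem_powerset.mp hTS, hUne.mono hUT, hTconn, fun U' hTU' hU'S hU' => ?_⟩, hUT⟩
  refine (eq_of_subset_of_card_le hTU' (hmax U' ?_)).symm
  exact mem_filter.mpr ⟨mem_powerset.mpr hU'S, hUT.trans hTU', hU'⟩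

lemma IsComp.subset_of_not_disconn (hT : IsComp atoms S T) (hU : ¬ Disconn atoms U)
    (hUS : U ⊆ S) (hTU : (T ∩ U).Nonempty) : U ⊆ T := by
  have hunion := hT.2.2.2 (T ∪ U) subset_union_left (union_subset hT.1 hUS)
    (not_disconn_union hT.2.2.1 hU hTU)
  exact union_eq_left.mp hunion

end Connectivity

section Characterization

variable [Fintype A] {atoms : A → Finset V}

lemma hier_of_forall_isComp_hierOn
    (h : ∀ T : Finset A, IsComp atoms univ T → HierOn atoms T ∅) : Hier atoms := by
  intro x hx y hy
  by_cases hxy : atOf atoms univ x ∩ atOf atoms univ y = ∅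
  · exact Or.inr (Or.inl hxy)
  obtain ⟨k, hk⟩ := nonempty_iff_ne_empty.mpr hxy
  obtain ⟨T, hT, hkT⟩ := exists_isComp_superset (not_disconn_singleton (atoms := atoms) k)
    (subset_univ _) (singleton_nonempty k)
  have hatT : ∀ z, k ∈ atOf atoms univ z → atOf atoms univ z ⊆ T := fun z hz =>
    hT.subset_of_not_disconn (not_disconn_atOf z) (subset_univ _)
      ⟨k, mem_inter.mpr ⟨hkT (mem_singleton_self k), hz⟩⟩
  have hTxy := h T hT x hx y hy
  rwa [atOf_eq_of_subset (hatT x (mem_inter.mp hk).1) (subset_univ _),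
    atOf_eq_of_subset (hatT y (mem_inter.mp hk).2) (subset_univ _)] at hTxy

/-- An atom outside `at(x)` adjacent to `at(x)` would share a variable `y` with it, and `at(y)`
could then neither contain, nor be contained in, nor be disjoint from `at(x)`. -/
lemma atOf_eq_univ_of_card_le (hH : Hier atoms) (hconn : ¬ Disconn atoms univ) {x : V}
    (hx : (atOf atoms univ x).Nonempty)
    (hmax : ∀ y, (atOf atoms univ y).card ≤ (atOf atoms univ x).card) :
    atOf atoms univ x = univ := by
  by_contra hne
  obtain ⟨c, hc, d, hd, y, hy⟩ := exists_inter_nonempty_of_not_disconn hconn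
    (subset_univ _) hx (sdiff_nonempty.mpr fun h => hne (univ_subset_iff.mp h))
  have hyc : c ∈ atOf atoms univ y := mem_atOf.mpr ⟨mem_univ c, (mem_inter.mp hy).1⟩
  have hyd : d ∈ atOf atoms univ y := mem_atOf.mpr ⟨mem_univ d, (mem_inter.mp hy).2⟩
  have hdx : d ∉ atOf atoms univ x := (mem_sdiff.mp hd).2
  rcases hH x (notMem_empty x) y (notMem_empty y) with hxy | hxy | hyx
  · exact hdx (eq_of_subset_of_card_le hxy (hmax y) ▸ hyd)
  · exact notMem_empty c (hxy ▸ mem_inter.mpr ⟨hc, hyc⟩)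
  · exact hdx (hyx hyd)

lemma exists_forall_mem_of_hier_of_not_disconn [Nontrivial A] (hH : Hier atoms)
    (hconn : ¬ Disconn atoms univ) : ∃ x, ∀ i, x ∈ atoms i := by
  obtain ⟨i₀, j₀, hij⟩ := exists_pair_ne A
  obtain ⟨a, -, b, -, y₀, hy₀⟩ := exists_inter_nonempty_of_not_disconn hconn
    (subset_univ {i₀}) (singleton_nonempty i₀)
    ⟨j₀, mem_sdiff.mpr ⟨mem_univ j₀, notMem_singleton.mpr hij.symm⟩⟩
  have hy₀a : y₀ ∈ atoms a := (mem_inter.mp hy₀).1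
  obtain ⟨x, -, hmax⟩ := exists_max_image (univ.sup atoms)
    (fun v => (atOf atoms univ v).card)
    ⟨y₀, mem_sup.mpr ⟨a, mem_univ a, hy₀a⟩⟩
  have hmax' : ∀ y, (atOf atoms univ y).card ≤ (atOf atoms univ x).card := by
    intro y
    by_cases hy : y ∈ univ.sup atoms
    · exact hmax y hy
    · have hempty : atOf atoms univ y = ∅ := eq_empty_of_forall_notMem fun i hi =>
        hy (mem_sup.mpr ⟨i, mem_univ i, (mem_atOf.mp hi).2⟩)
      simp [hempty]
  have hx : (atOf atoms univ x).Nonempty := by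
    refine card_pos.mp (lt_of_lt_of_le (card_pos.mpr ⟨a, ?_⟩) (hmax' y₀))
    exact mem_atOf.mpr ⟨mem_univ a, hy₀a⟩
  have hxuniv := atOf_eq_univ_of_card_le hH hconn hx hmax'
  exact ⟨x, fun i => (mem_atOf.mp (hxuniv ▸ mem_univ i)).2⟩

end Characterization

end

theorem hierarchical_recursive_characterization_general
    {A V : Type*} [Fintype A] [Nonempty A] (atoms : A → Finset V) :
    Hier atoms ↔
      Fintype.card A = 1 ∨
      (Disconn atoms Finset.univ ∧
        ∀ T : Finset A, IsComp atoms Finset.univ T → HierOn atoms T ∅) ∨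
      (∃ x : V, (∀ i : A, x ∈ atoms i) ∧ Hier (fun i => atoms i \ {x})) := by
  constructor
  · intro hH
    by_cases h1 : Fintype.card A = 1
    · exact Or.inl h1
    have : Nontrivial A :=
      Fintype.one_lt_card_iff_nontrivial.mp (by have := Fintype.card_pos (α := A); omega)
    by_cases hconn : Disconn atoms Finset.univ
    · exact Or.inr (Or.inl ⟨hconn, fun T _ => hH.mono (Finset.subset_univ T)⟩)
    obtain ⟨x, hx⟩ := exists_forall_mem_of_hier_of_not_disconn hH hconn
    exact Or.inr (Or.inr ⟨x, hx, (hierOn_sdiff_singleton_iff fun i _ => hx i).mpr hH⟩)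
  · rintro (h1 | ⟨-, hcomp⟩ | ⟨x, hx, hrec⟩)
    · have := Fintype.card_le_one_iff_subsingleton.mp h1.le
      exact hier_of_subsingleton
    · exact hier_of_forall_isComp_hierOn hcomp
    · exact (hierOn_sdiff_singleton_iff fun i _ => hx i).mp hrec

/-- Recursive characterization of hierarchical queries.  A Boolean
self-join-free conjunctive query `q` is hierarchical iff (1) it consists of a single atom,
or (2) it is disconnected (has `k ≥ 2` connected components) and all of its connected
components are hierarchical, or (3) it has a separator variable `x` (an existential
variable occurring in every atom) such that `q − x` is hierarchical. -/
theorem hierarchical_recursive_characterization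
    {A V : Type*} [Fintype A] [Fintype V] [Nonempty A] (atoms : A → Finset V) :
    Hier atoms ↔
      Fintype.card A = 1 ∨
      (Disconn atoms Finset.univ ∧
        ∀ T : Finset A, IsComp atoms Finset.univ T → HierOn atoms T ∅) ∨
      (∃ x : V, (∀ i : A, x ∈ atoms i) ∧ Hier (fun i => atoms i \ {x})) :=
  hierarchical_recursive_characterization_general atoms

end

end PDB
end

section
/- For every Boolean self-join-free conjunctive query q, every tuple-independent probabilistic database D, and every dissociation Δ of q: P(q) ≤ P(q^Δ), where P(q^Δ) is evaluated on the dissociated database D^Δ. -/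
open scoped Classical

namespace PDB

noncomputable section

variable {A V dom : Type*}

/-!
Both sides are probabilities of monotone DNFs in independent Boolean variables, one per tuple:
`P(q)` of the lineage of `q` over the tuples of `D`, and `P(q^Δ)` of the lineage of `q^Δ` over
the tuples of `D^Δ`. The projection `θ : D^Δ → D` maps every implicant of the second DNF
injectively onto an implicant of the first, and a copy of a tuple has the probability of the
tuple. Identifying every copy with one fixed representative turns the second DNF into the first;
undo the identifications one copy at a time. Each step can only increase the probability: if
the equiprobable variables `a`, `b` never occur in a common implicant of `E`, then pairing every
world `ω` with `ω ∘ swap a b` (which has the same weight) reduces the claim to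
`[E (ω[b ↦ ω a])] + [E (ω[a ↦ ω b])] ≤ [E ω] + [E (ω ∘ swap a b)]`, where the left side sees the
worlds `ω ⊔ ω ∘ swap a b` and `ω ⊓ ω ∘ swap a b`.
-/

section WorldProb

variable {X : Type*} [Fintype X]

def worldProb (p : X → ℝ) (ω : X → Bool) : ℝ :=
  ∏ x, if ω x = true then p x else 1 - p x

def eventProb (p : X → ℝ) (E : (X → Bool) → Prop) : ℝ :=
  ∑ ω, worldProb p ω * if E ω then 1 else 0

lemma worldProb_nonneg {p : X → ℝ} (hp : ∀ x, 0 ≤ p x ∧ p x ≤ 1) (ω : X → Bool) :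
    0 ≤ worldProb p ω :=
  Finset.prod_nonneg fun x _ => by split_ifs <;> linarith [hp x]

lemma sum_worldProb (p : X → ℝ) : ∑ ω, worldProb p ω = 1 := by
  have h := Fintype.prod_sum fun x (b : Bool) => if b = true then p x else 1 - p x
  simp only [Fintype.sum_bool, if_true, Bool.false_eq_true, if_false, add_sub_cancel,
    Finset.prod_const_one] at h
  exact h.symm

lemma eventProb_congr {p : X → ℝ} {E E' : (X → Bool) → Prop} (h : ∀ ω, E ω ↔ E' ω) :
    eventProb p E = eventProb p E' := by
  simp only [eventProb, h]

lemma eventProb_add_eventProb_le {p : X → ℝ} (hp : ∀ x, 0 ≤ p x ∧ p x ≤ 1)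
    {E₁ E₂ F₁ F₂ : (X → Bool) → Prop}
    (h : ∀ ω, ((if E₁ ω then 1 else 0) + if E₂ ω then 1 else 0 : ℝ) ≤
      (if F₁ ω then 1 else 0) + if F₂ ω then 1 else 0) :
    eventProb p E₁ + eventProb p E₂ ≤ eventProb p F₁ + eventProb p F₂ := by
  simp only [eventProb, ← Finset.sum_add_distrib, ← mul_add]
  exact Finset.sum_le_sum fun ω _ => mul_le_mul_of_nonneg_left (h ω) (worldProb_nonneg hp ω)

lemma eventProb_comp_equiv {S : Type*} [Fintype S] (p : X → ℝ) (e : S ≃ X)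
    (E : (S → Bool) → Prop) :
    eventProb p (fun ω => E (ω ∘ e)) = eventProb (p ∘ e) E := by
  rw [eventProb, ← (e.arrowCongr (Equiv.refl Bool)).sum_comp]
  refine Finset.sum_congr rfl fun τ _ => ?_
  have hw : worldProb p (e.arrowCongr (Equiv.refl Bool) τ) = worldProb (p ∘ e) τ := by
    rw [worldProb, ← e.prod_comp]
    simp [worldProb]
  have hτ : e.arrowCongr (Equiv.refl Bool) τ ∘ e = τ := by ext; simp
  rw [hw, hτ]

lemma eventProb_restrict (p : X → ℝ) (P : X → Prop) (E : ({x // P x} → Bool) → Prop) :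
    eventProb p (fun ω => E fun x => ω x) = eventProb (fun x : {x // P x} => p x) E := by
  let e := Equiv.piEquivPiSubtypeProd P fun _ => Bool
  have hw : ∀ u v, worldProb p (e.symm (u, v)) =
      worldProb (fun x : {x // P x} => p x) u * worldProb (fun x : {x // ¬ P x} => p x) v := by
    intro u v
    rw [worldProb, ← Fintype.prod_subtype_mul_prod_subtype P]
    congr 1
    · exact Finset.prod_congr rfl fun x _ => by simp [e, x.2]
    · exact Finset.prod_congr rfl fun x _ => by simp [e, x.2]
  have hu : ∀ u v, (fun x : {x // P x} => e.symm (u, v) x) = u := fun u v => by ext x; simp [e, x.2]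
  rw [eventProb, ← e.symm.sum_comp, Fintype.sum_prod_type]
  simp only [hw, hu, mul_right_comm (worldProb _ _) (worldProb _ _), ← Finset.mul_sum]
  have h1 : ∑ v : {x // ¬ P x} → Bool, worldProb (fun x : {x // ¬ P x} => p x) v = 1 := by
    convert sum_worldProb _
  simp only [h1, mul_one, eventProb]
  convert rfl

lemma eventProb_comp_of_injective {S : Type*} [Fintype S] (p : X → ℝ) {ι : S → X}
    (hι : Function.Injective ι) (E : (S → Bool) → Prop) :
    eventProb p (fun ω => E (ω ∘ ι)) = eventProb (p ∘ ι) E := by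
  let e : S ≃ {x // x ∈ Set.range ι} := Equiv.ofInjective ι hι
  rw [show p ∘ ι = (fun x : {x // x ∈ Set.range ι} => p x) ∘ e from rfl, ← eventProb_comp_equiv]
  convert eventProb_restrict p (· ∈ Set.range ι) fun τ => E (τ ∘ e) using 2
  rfl

end WorldProb

section Merge

variable {X : Type*} {E : (X → Bool) → Prop} {a b : X}

lemma ite_add_ite_le_ite_add_ite {P Q R S : Prop} (hP : P → R ∨ S) (hQ : Q → R ∧ S) :
    ((if P then 1 else 0) + (if Q then 1 else 0) : ℝ) ≤
      (if R then 1 else 0) + if S then 1 else 0 := by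
  split_ifs <;> simp_all

lemma ite_update_add_ite_update_le_of_eq_true_of_eq_false (hE : Monotone E)
    (hsplit : ∀ ω, E ω → E (Function.update ω a false) ∨ E (Function.update ω b false))
    {ω : X → Bool} (ha : ω a = true) (hb : ω b = false) :
    ((if E (Function.update ω b true) then 1 else 0) +
        (if E (Function.update ω a false) then 1 else 0) : ℝ) ≤
      (if E ω then 1 else 0) + if E (ω ∘ Equiv.swap a b) then 1 else 0 := by
  have hswap : ω ∘ Equiv.swap a b = Function.update (Function.update ω b true) a false := by
    rw [Equiv.comp_swap_eq_update, ha, hb]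
  refine ite_add_ite_le_ite_add_ite (fun h => ?_) (fun h => ⟨?_, ?_⟩)
  · rcases hsplit _ h with h | h
    · exact Or.inr (hswap ▸ h)
    · rw [Function.update_idem, ← hb, Function.update_eq_self] at h
      exact Or.inl h
  · exact hE (update_le_self_iff.2 (by simp)) h
  · have hle : ω ≤ Function.update ω b true := le_update_self_iff.2 (by simp)
    exact hE (hswap ▸ update_le_update_iff.2 ⟨le_rfl, fun j _ => hle j⟩) h

lemma ite_update_add_ite_update_le (hE : Monotone E)
    (hsplit : ∀ ω, E ω → E (Function.update ω a false) ∨ E (Function.update ω b false))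
    (ω : X → Bool) :
    ((if E (Function.update ω b (ω a)) then 1 else 0) +
        (if E (Function.update ω a (ω b)) then 1 else 0) : ℝ) ≤
      (if E ω then 1 else 0) + if E (ω ∘ Equiv.swap a b) then 1 else 0 := by
  by_cases h : ω a = ω b
  · have h₁ : Function.update ω b (ω a) = ω := by rw [h, Function.update_eq_self]
    have h₂ : Function.update ω a (ω b) = ω := by rw [← h, Function.update_eq_self]
    rw [Equiv.comp_swap_eq_update, h₁, h₂]
  cases ha : ω a <;> cases hb : ω b <;> simp only [ha, hb, not_true_eq_false] at h
  · have h := ite_update_add_ite_update_le_of_eq_true_of_eq_false hE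
      (fun ω h => (hsplit ω h).symm) hb ha
    rw [Equiv.swap_comm] at h
    linarith
  · exact ite_update_add_ite_update_le_of_eq_true_of_eq_false hE hsplit ha hb

lemma eventProb_merge_le [Fintype X] {p : X → ℝ} (hp : ∀ x, 0 ≤ p x ∧ p x ≤ 1)
    (hpab : p a = p b) (hE : Monotone E)
    (hsplit : ∀ ω, E ω → E (Function.update ω a false) ∨ E (Function.update ω b false)) :
    eventProb p (fun ω => E (Function.update ω b (ω a))) ≤ eventProb p E := by
  have hσ : p ∘ Equiv.swap a b = p := by
    ext x
    rcases eq_or_ne x a with rfl | hxa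
    · simp [hpab]
    rcases eq_or_ne x b with rfl | hxb
    · simp [hpab]
    · simp [Equiv.swap_apply_of_ne_of_ne hxa hxb]
  have h₁ : eventProb p (fun ω => E (Function.update ω a (ω b))) =
      eventProb p (fun ω => E (Function.update ω b (ω a))) := by
    have h := eventProb_comp_equiv p (Equiv.swap a b) fun ω => E (Function.update ω b (ω a))
    rw [hσ] at h
    rw [← h]
    refine eventProb_congr fun ω => ?_
    have : Function.update (ω ∘ Equiv.swap a b) b ((ω ∘ Equiv.swap a b) a) =
        Function.update ω a (ω b) := by
      ext x
      simp only [Function.update_apply, Function.comp_apply, Equiv.swap_apply_def]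
      split_ifs <;> simp_all
    rw [this]
  have h₂ : eventProb p (fun ω => E (ω ∘ Equiv.swap a b)) = eventProb p E := by
    rw [eventProb_comp_equiv, hσ]
  have := eventProb_add_eventProb_le hp (ite_update_add_ite_update_le hE hsplit)
  linarith

end Merge

def dnfEvent {X I : Type*} (S : I → Set X) (ω : X → Bool) : Prop :=
  ∃ ν, ∀ x ∈ S ν, ω x = true

lemma dnfEvent_monotone {X I : Type*} (S : I → Set X) : Monotone (dnfEvent S) :=
  fun _ _ hle ⟨ν, h⟩ => ⟨ν, fun x hx => le_antisymm le_top (h x hx ▸ hle x)⟩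

section Collapse

variable {X Y I : Type*} {θ : X → Y} {sec : Y → X}

variable (θ sec) in
/-- Reads every variable of `s` through the representative `sec (θ x)` of its fibre; for
`s = univ` all copies of an element of `Y` become perfectly correlated. -/
def collapse (s : Finset X) (x : X) : X :=
  if x ∈ s then sec (θ x) else x

lemma apply_collapse (hsec : Function.LeftInverse θ sec) (s : Finset X) (x : X) :
    θ (collapse θ sec s x) = θ x := by
  unfold collapse
  split_ifs <;> simp [hsec _]

lemma comp_collapse_insert (hsec : Function.LeftInverse θ sec) {s : Finset X} {b : X}
    (hb : b ∉ s) (hbs : sec (θ b) ≠ b) (ω : X → Bool) :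
    Function.update ω b (ω (sec (θ b))) ∘ collapse θ sec s = ω ∘ collapse θ sec (insert b s) := by
  have hsec_ne : ∀ y, sec y ≠ b := fun y hy => hbs (by rw [← hy, hsec y])
  ext x
  by_cases hxs : x ∈ s
  · simp [collapse, hxs, hsec_ne]
  by_cases hxb : x = b
  · simp [collapse, hxb, hb]
  · simp [collapse, hxs, hxb]

lemma dnfEvent_comp_collapse_split (hsec : Function.LeftInverse θ sec) {S : I → Set X}
    (hS : ∀ ν, Set.InjOn θ (S ν)) (s : Finset X) {b : X} (hbs : sec (θ b) ≠ b)
    {ω : X → Bool} (h : dnfEvent S (ω ∘ collapse θ sec s)) :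
    dnfEvent S (Function.update ω (sec (θ b)) false ∘ collapse θ sec s) ∨
      dnfEvent S (Function.update ω b false ∘ collapse θ sec s) := by
  obtain ⟨ν, hν⟩ := h
  by_cases hb : ∃ x₀ ∈ S ν, collapse θ sec s x₀ = b
  · obtain ⟨x₀, hx₀, hx₀b⟩ := hb
    refine Or.inl ⟨ν, fun x hx => ?_⟩
    have hne : collapse θ sec s x ≠ sec (θ b) := by
      intro hxa
      have hθ : θ x = θ x₀ := by
        rw [← apply_collapse hsec s x, hxa, hsec, ← hx₀b, apply_collapse hsec]
      exact hbs (hxa.symm.trans (hS ν hx hx₀ hθ ▸ hx₀b))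
    simpa [Function.update_of_ne hne] using hν x hx
  · push Not at hb
    exact Or.inr ⟨ν, fun x hx => by simpa [Function.update_of_ne (hb x hx)] using hν x hx⟩

lemma eventProb_comp_collapse_insert_le [Fintype X] {p : Y → ℝ} (hp : ∀ y, 0 ≤ p y ∧ p y ≤ 1)
    (hsec : Function.LeftInverse θ sec) {S : I → Set X} (hS : ∀ ν, Set.InjOn θ (S ν))
    {s : Finset X} {b : X} (hb : b ∉ s) :
    eventProb (p ∘ θ) (fun ω => dnfEvent S (ω ∘ collapse θ sec (insert b s))) ≤
      eventProb (p ∘ θ) (fun ω => dnfEvent S (ω ∘ collapse θ sec s)) := by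
  by_cases hbs : sec (θ b) = b
  · have : collapse θ sec (insert b s) = collapse θ sec s := by
      ext x
      by_cases hxb : x = b <;> simp [collapse, hxb, hbs, hb]
    rw [this]
  simp_rw [← comp_collapse_insert hsec hb hbs]
  exact eventProb_merge_le (E := fun ω => dnfEvent S (ω ∘ collapse θ sec s))
    (fun x => hp (θ x)) (congrArg p (hsec (θ b)))
    (fun ω ω' hle => dnfEvent_monotone S fun x => hle _)
    (fun ω => dnfEvent_comp_collapse_split hsec hS s hbs)

lemma eventProb_comp_collapse_le [Fintype X] {p : Y → ℝ} (hp : ∀ y, 0 ≤ p y ∧ p y ≤ 1)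
    (hsec : Function.LeftInverse θ sec) {S : I → Set X} (hS : ∀ ν, Set.InjOn θ (S ν))
    (s : Finset X) :
    eventProb (p ∘ θ) (fun ω => dnfEvent S (ω ∘ collapse θ sec s)) ≤
      eventProb (p ∘ θ) (dnfEvent S) := by
  induction s using Finset.induction_on with
  | empty => simp [collapse, Function.comp_def]
  | insert b s hb ih => exact (eventProb_comp_collapse_insert_le hp hsec hS hb).trans ih

end Collapse

theorem eventProb_dnfEvent_image_le {X Y I : Type*} [Fintype X] [Fintype Y] {p : Y → ℝ}
    (hp : ∀ y, 0 ≤ p y ∧ p y ≤ 1) {θ : X → Y} {sec : Y → X} (hsec : Function.LeftInverse θ sec)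
    {S : I → Set X} (hS : ∀ ν, Set.InjOn θ (S ν)) :
    eventProb p (dnfEvent fun ν => θ '' S ν) ≤ eventProb (p ∘ θ) (dnfEvent S) := by
  calc eventProb p (dnfEvent fun ν => θ '' S ν)
      = eventProb (p ∘ θ) (fun ω => dnfEvent (fun ν => θ '' S ν) (ω ∘ sec)) := by
        rw [eventProb_comp_of_injective _ hsec.injective, Function.comp_assoc, hsec.comp_eq_id]
        rfl
    _ = eventProb (p ∘ θ) (fun ω => dnfEvent S (ω ∘ collapse θ sec Finset.univ)) := by
        refine eventProb_congr fun ω => ?_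
        simp [dnfEvent, collapse]
    _ ≤ eventProb (p ∘ θ) (dnfEvent S) := eventProb_comp_collapse_le hp hsec hS _

section Query

variable {atoms : A → Finset V}

def dbProb (D : DB atoms dom) (x : Σ i, {t // t ∈ D.tuples i}) : ℝ :=
  D.prob x.1 x.2

lemma queryProb_eq_eventProb [Fintype A] (D : DB atoms dom) :
    queryProb atoms D = eventProb (dbProb D) fun ω => ∃ ν : V → dom, ∀ i,
      ∃ h : restrict atoms i ν ∈ D.tuples i, ω ⟨i, ⟨restrict atoms i ν, h⟩⟩ = true := by
  refine (Finset.sum_equiv (Equiv.piCurry fun _ _ => Bool) (by simp) fun ω _ => ?_).symm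
  rw [worldProb, ← Finset.univ_sigma_univ, Finset.prod_sigma]
  rfl

lemma queryProb_eq_zero_of_isEmpty [Fintype A] [IsEmpty (V → dom)] (D : DB atoms dom) :
    queryProb atoms D = 0 := by
  rw [queryProb_eq_eventProb]
  simp [eventProb]

lemma subset_dissAtoms (Δ : A → Finset V) (i : A) : atoms i ⊆ dissAtoms atoms Δ i :=
  Finset.subset_union_left

def extendTup {xs : Finset V} (ν₀ : V → dom) (t : {x // x ∈ xs} → dom) (ys : Finset V) :
    {x // x ∈ ys} → dom :=
  fun x => if h : x.1 ∈ xs then t ⟨x.1, h⟩ else ν₀ x.1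

lemma restrictTup_extendTup {xs ys : Finset V} (h : xs ⊆ ys) (ν₀ : V → dom)
    (t : {x // x ∈ xs} → dom) : restrictTup h (extendTup ν₀ t ys) = t := by
  ext x
  simp [restrictTup, extendTup, x.2]

variable [Fintype dom]

lemma mem_dissDB_tuples {Δ : A → Finset V} {D : DB atoms dom} {i : A}
    {t : {x // x ∈ dissAtoms atoms Δ i} → dom} :
    t ∈ (dissDB atoms Δ D).tuples i ↔ restrictTup (subset_dissAtoms Δ i) t ∈ D.tuples i :=
  Finset.mem_filter.trans (and_iff_right (Finset.mem_univ _))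

def dissTupleProj (Δ : A → Finset V) (D : DB atoms dom) :
    (Σ i, {t // t ∈ (dissDB atoms Δ D).tuples i}) → Σ i, {t // t ∈ D.tuples i} :=
  fun x => ⟨x.1, ⟨restrictTup (subset_dissAtoms Δ x.1) x.2.1, mem_dissDB_tuples.1 x.2.2⟩⟩

def dissTupleExtend (Δ : A → Finset V) (D : DB atoms dom) (ν₀ : V → dom) :
    (Σ i, {t // t ∈ D.tuples i}) → Σ i, {t // t ∈ (dissDB atoms Δ D).tuples i} :=
  fun y => ⟨y.1, ⟨extendTup ν₀ y.2.1 _,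
    mem_dissDB_tuples.2 (by rw [restrictTup_extendTup]; exact y.2.2)⟩⟩

lemma leftInverse_dissTupleProj_dissTupleExtend (Δ : A → Finset V) (D : DB atoms dom)
    (ν₀ : V → dom) : Function.LeftInverse (dissTupleProj Δ D) (dissTupleExtend Δ D ν₀) := by
  rintro ⟨i, t, ht⟩
  exact Sigma.ext rfl <| heq_of_eq <| Subtype.ext <|
    restrictTup_extendTup (subset_dissAtoms Δ i) ν₀ t

/-- The implicant of the lineage of `q^Δ` on `D^Δ` contributed by a satisfying valuation `ν`
of `q` on `D`. -/
def dissImplicant (Δ : A → Finset V) (D : DB atoms dom)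
    (ν : {ν : V → dom // ∀ i, restrict atoms i ν ∈ D.tuples i}) :
    Set (Σ i, {t // t ∈ (dissDB atoms Δ D).tuples i}) :=
  Set.range fun i => ⟨i, ⟨restrict (dissAtoms atoms Δ) i ν.1, mem_dissDB_tuples.2 (ν.2 i)⟩⟩

lemma injOn_dissTupleProj_dissImplicant (Δ : A → Finset V) (D : DB atoms dom)
    (ν : {ν : V → dom // ∀ i, restrict atoms i ν ∈ D.tuples i}) :
    Set.InjOn (dissTupleProj Δ D) (dissImplicant Δ D ν) := by
  rintro _ ⟨i, rfl⟩ _ ⟨j, rfl⟩ h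
  cases congrArg Sigma.fst h
  rfl

lemma queryProb_eq_eventProb_dnfEvent_image [Fintype A] (Δ : A → Finset V) (D : DB atoms dom) :
    queryProb atoms D =
      eventProb (dbProb D) (dnfEvent fun ν => dissTupleProj Δ D '' dissImplicant Δ D ν) := by
  rw [queryProb_eq_eventProb]
  refine eventProb_congr fun ω => ⟨?_, ?_⟩
  · rintro ⟨ν, hν⟩
    refine ⟨⟨ν, fun i => (hν i).1⟩, ?_⟩
    rintro _ ⟨_, ⟨i, rfl⟩, rfl⟩
    exact (hν i).2
  · rintro ⟨ν, hν⟩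
    exact ⟨ν.1, fun i => ⟨ν.2 i, hν _ ⟨_, ⟨i, rfl⟩, rfl⟩⟩⟩

lemma dissProb_eq_eventProb_dnfEvent [Fintype A] (Δ : A → Finset V) (D : DB atoms dom) :
    dissProb atoms Δ D =
      eventProb (dbProb D ∘ dissTupleProj Δ D) (dnfEvent (dissImplicant Δ D)) := by
  rw [dissProb, queryProb_eq_eventProb]
  refine eventProb_congr fun ω => ⟨?_, ?_⟩
  · rintro ⟨ν, hν⟩
    refine ⟨⟨ν, fun i => mem_dissDB_tuples.1 (hν i).1⟩, ?_⟩
    rintro _ ⟨i, rfl⟩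
    exact (hν i).2
  · rintro ⟨ν, hν⟩
    exact ⟨ν.1, fun i => ⟨_, hν _ ⟨i, rfl⟩⟩⟩

end Query

theorem dissociation_upper_query_bound_general
    {A V dom : Type*} [Fintype A] [Fintype dom]
    (atoms : A → Finset V) (D : DB atoms dom) (hD : D.Valid)
    (Δ : A → Finset V) :
    queryProb atoms D ≤ dissProb atoms Δ D := by
  rcases isEmpty_or_nonempty (V → dom) with hV | ⟨⟨ν₀⟩⟩
  · rw [dissProb, queryProb_eq_zero_of_isEmpty, queryProb_eq_zero_of_isEmpty]
  rw [queryProb_eq_eventProb_dnfEvent_image Δ, dissProb_eq_eventProb_dnfEvent]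
  exact eventProb_dnfEvent_image_le (fun x => hD x.1 x.2 x.2.2)
    (leftInverse_dissTupleProj_dissTupleExtend Δ D ν₀) (injOn_dissTupleProj_dissImplicant Δ D)

/-- Upper query bounds.  For every Boolean self-join-free conjunctive
query `q`, every tuple-independent probabilistic database `D`, and every dissociation `Δ`
of `q`: `P(q) ≤ P(q^Δ)`, where `P(q^Δ)` is evaluated on the dissociated database `D^Δ`. -/
theorem dissociation_upper_query_bound
    {A V dom : Type*} [Fintype A] [Fintype V] [Fintype dom]
    (atoms : A → Finset V) (D : DB atoms dom) (hD : D.Valid)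
    (Δ : A → Finset V) (hΔ : IsDiss atoms ∅ Δ) :
    queryProb atoms D ≤ dissProb atoms Δ D :=
  dissociation_upper_query_bound_general atoms D hD Δ

end

end PDB
end

section
/- Let q be a Boolean self-join-free conjunctive query, D a tuple-independent probabilistic database, and Δ a dissociation of q. Then the lineage F_{q^Δ,D^Δ} of the dissociated query on the dissociated database is a dissociation of the lineage F_{q,D} through the substitution θ : D^Δ → D that maps every tuple t' ∈ R_i^{ȳ_i} to its projection π_{x̄_i}(t') ∈ R_i; moreover, no two distinct dissociations of the same tuple occur together in one prime implicant of F_{q^Δ,D^Δ}. -/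
open scoped Classical

namespace PDB

noncomputable section

variable {A V dom : Type*}

/-- The dissociated lineage is a dissociation of the lineage.
The lineage `F_{q^Δ,D^Δ}` of the dissociated query on the dissociated database is a
dissociation of the lineage `F_{q,D}` through the substitution `θ : D^Δ → D` projecting
every tuple of `R_i^{ȳ_i}` onto the original variables `x̄_i`; moreover, no two distinct
dissociations of the same tuple occur together in one prime implicant of `F_{q^Δ,D^Δ}`. -/
theorem lineage_dissociation
    {A V dom : Type*} [Fintype A] [Fintype V] [Fintype dom]
    (atoms : A → Finset V) (D : DB atoms dom)
    (Δ : A → Finset V) (hΔ : IsDiss atoms ∅ Δ) :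
    ((lineage (dissAtoms atoms Δ) (dissDB atoms Δ D)).image
        (Finset.image (dissTupleMap atoms Δ)) = lineage atoms D) ∧
    (∀ T' : Finset (Σ i : A, {x // x ∈ dissAtoms atoms Δ i} → dom),
      IsPrimeImplicant (lineage (dissAtoms atoms Δ) (dissDB atoms Δ D)) T' →
        Set.InjOn (dissTupleMap atoms Δ (dom := dom)) ↑T') := by
  have key : ∀ ν : V → dom, ∀ i : A,
      (restrict (dissAtoms atoms Δ) i ν ∈ (dissDB atoms Δ D).tuples i ↔
        restrict atoms i ν ∈ D.tuples i) := by
    intro ν i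
    simp only [dissDB, Finset.mem_filter, Finset.mem_univ, true_and]
    rfl
  have imgkey : ∀ ν : V → dom,
      (Finset.univ.image (fun i : A =>
          (⟨i, restrict (dissAtoms atoms Δ) i ν⟩ :
            Σ i : A, {x // x ∈ dissAtoms atoms Δ i} → dom))).image
        (dissTupleMap atoms Δ) =
      Finset.univ.image (fun i : A =>
          (⟨i, restrict atoms i ν⟩ : Σ i : A, {x // x ∈ atoms i} → dom)) := by
    intro ν
    rw [Finset.image_image]
    rfl
  constructor
  · ext T
    simp only [lineage, Finset.mem_image, Finset.mem_filter, Finset.mem_univ, true_and]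
    constructor
    · rintro ⟨T', ⟨ν, hν, rfl⟩, rfl⟩
      exact ⟨ν, fun i => (key ν i).mp (hν i), (imgkey ν).symm⟩
    · rintro ⟨ν, hν, rfl⟩
      exact ⟨_, ⟨ν, fun i => (key ν i).mpr (hν i), rfl⟩, imgkey ν⟩
  · intro T' hT'
    have hmem := hT'.1
    simp only [lineage, Finset.mem_image, Finset.mem_filter, Finset.mem_univ,
      true_and] at hmem
    obtain ⟨ν, hν, rfl⟩ := hmem
    intro a ha b hb hab
    simp only [Finset.coe_image, Set.mem_image, Finset.mem_coe, Finset.mem_univ,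
      Finset.coe_univ, Set.image_univ, Set.mem_range] at ha hb
    obtain ⟨i, rfl⟩ := ha
    obtain ⟨j, rfl⟩ := hb
    have hij : i = j := congrArg Sigma.fst hab
    subst hij
    rfl

end

end PDB
end
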